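/- arXiv:1411.7132 — 4 statements merged into one kernel-verified Lean document; each statement's English description precedes it below -/
import Mathlib

section
/- Let ψ ∈ C_c^∞(ℝ³). For ε > 0 define the surface integral J_ε = −(2/F²) ∫₀^{2π} ∫_{−π/2}^{π/2} G(φ) · ψ(ε cos φ cos θ, ε cos φ sin θ, ε sin φ)/ε dφ dθ, where G(φ) = sin²φ cos φ / (cos²φ + F^{-2} sin²φ)². Then J_ε + (4π/F²)(1/ε)(∫_{−π/2}^{π/2} G(φ) dφ) ψ(0) → 0 as ε → 0⁺. -/
open MeasureTheory Filter
open scoped Real Topology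

set_option maxHeartbeats 1000000

noncomputable section

/-- `G(φ) = sin²φ cos φ / (cos²φ + F⁻² sin²φ)²`. -/
def Gfun (F φ : ℝ) : ℝ :=
  Real.sin φ ^ 2 * Real.cos φ / (Real.cos φ ^ 2 + Real.sin φ ^ 2 / F ^ 2) ^ 2

/-- The surface integral
`J_ε = −(2/F²) ∫₀^{2π} ∫_{−π/2}^{π/2} G(φ) ψ(ε cos φ cos θ, ε cos φ sin θ, ε sin φ)/ε dφ dθ`. -/
def Jeps (F : ℝ) (ψ : (Fin 3 → ℝ) → ℝ) (ε : ℝ) : ℝ :=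
  -(2 / F ^ 2) *
    ∫ θ in (0 : ℝ)..(2 * π),
      ∫ φ in (-(π / 2) : ℝ)..(π / 2),
        Gfun F φ *
          ψ ![ε * Real.cos φ * Real.cos θ, ε * Real.cos φ * Real.sin θ, ε * Real.sin φ] / ε

/-- The point on the `F`-sphere. -/
def vv (ε θ φ : ℝ) : Fin 3 → ℝ :=
  ![ε * Real.cos φ * Real.cos θ, ε * Real.cos φ * Real.sin θ, ε * Real.sin φ]

/-- Taylor remainder of `ψ`, rescaled. -/
def rr (ψ : (Fin 3 → ℝ) → ℝ) (L : (Fin 3 → ℝ) →L[ℝ] ℝ) (ε θ φ : ℝ) : ℝ :=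
  (ψ (vv ε θ φ) - ψ 0 - L (vv ε θ φ)) / ε

lemma denom_ge {F : ℝ} (hF0 : 0 < F) (hF1 : F ≤ 1) (φ : ℝ) :
    1 ≤ Real.cos φ ^ 2 + Real.sin φ ^ 2 / F ^ 2 := by
  have h2 : Real.sin φ ^ 2 ≤ Real.sin φ ^ 2 / F ^ 2 := by
    rw [le_div_iff₀ (by positivity)]
    nlinarith [sq_nonneg (Real.sin φ),
      mul_nonneg (sq_nonneg (Real.sin φ)) (show (0:ℝ) ≤ 1 - F ^ 2 by nlinarith)]
  nlinarith [Real.sin_sq_add_cos_sq φ]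

lemma Gfun_continuous {F : ℝ} (hF0 : 0 < F) (hF1 : F ≤ 1) : Continuous (Gfun F) := by
  apply Continuous.div (by fun_prop) (by fun_prop)
  intro φ
  exact pow_ne_zero 2 (by nlinarith [denom_ge hF0 hF1 φ])

lemma Gfun_abs_le {F : ℝ} (hF0 : 0 < F) (hF1 : F ≤ 1) (φ : ℝ) : |Gfun F φ| ≤ 1 := by
  have hd := denom_ge hF0 hF1 φ
  rw [Gfun, abs_div, abs_pow]
  apply div_le_one_of_le₀
  · have h1 := Real.abs_cos_le_one φ
    have h2 := Real.abs_sin_le_one φ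
    have h3 := le_abs_self (Real.cos φ ^ 2 + Real.sin φ ^ 2 / F ^ 2)
    rw [abs_mul, abs_pow]
    nlinarith [abs_nonneg (Real.sin φ), abs_nonneg (Real.cos φ),
      abs_nonneg (Real.cos φ ^ 2 + Real.sin φ ^ 2 / F ^ 2)]
  · positivity

lemma Gsin_integral_zero {F : ℝ} (hF0 : 0 < F) (hF1 : F ≤ 1) :
    (∫ φ in (-(π/2) : ℝ)..(π/2), Gfun F φ * Real.sin φ) = 0 := by
  have hGeven : ∀ x : ℝ, Gfun F (-x) = Gfun F x := by intro x; simp [Gfun]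
  have hf : Continuous fun x => Gfun F x * Real.sin x :=
    (Gfun_continuous hF0 hF1).mul Real.continuous_sin
  have h := intervalIntegral.integral_comp_neg (a := (0:ℝ)) (b := π/2)
    (f := fun x => Gfun F x * Real.sin x)
  simp only [neg_zero] at h
  rw [← intervalIntegral.integral_add_adjacent_intervals (b := (0:ℝ))
    (hf.intervalIntegrable _ _) (hf.intervalIntegrable _ _), ← h]
  simp [hGeven, intervalIntegral.integral_neg]

lemma CLM_apply_vec (L : (Fin 3 → ℝ) →L[ℝ] ℝ) (x y z : ℝ) :
    L ![x,y,z] = x * L ![1,0,0] + y * L ![0,1,0] + z * L ![0,0,1] := by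
  have h : (![x,y,z] : Fin 3 → ℝ) = x • ![1,0,0] + y • ![0,1,0] + z • ![0,0,1] := by
    funext i; fin_cases i <;> simp
  rw [h, map_add, map_add, L.map_smul, L.map_smul, L.map_smul,
    smul_eq_mul, smul_eq_mul, smul_eq_mul]

lemma vv_norm_le {ε : ℝ} (hε : 0 < ε) (θ φ : ℝ) : ‖vv ε θ φ‖ ≤ ε := by
  rw [vv, pi_norm_le_iff_of_nonneg hε.le]
  intro i
  have h1 := Real.abs_cos_le_one φ
  have h2 := Real.abs_sin_le_one φ
  have h3 := Real.abs_cos_le_one θ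
  have h4 := Real.abs_sin_le_one θ
  fin_cases i <;> simp [Real.norm_eq_abs, abs_mul, abs_of_pos hε] <;>
    nlinarith [abs_nonneg (Real.cos φ), abs_nonneg (Real.sin φ), abs_nonneg (Real.cos θ),
      abs_nonneg (Real.sin θ), mul_nonneg hε.le (abs_nonneg (Real.cos φ)),
      mul_nonneg hε.le (abs_nonneg (Real.sin φ))]

lemma vv_continuous (ε : ℝ) : Continuous fun p : ℝ × ℝ => vv ε p.1 p.2 := by
  simp only [vv]
  apply continuous_pi; intro i; fin_cases i <;> simp <;> fun_prop

lemma vv_continuous1 (ε θ : ℝ) : Continuous fun φ => vv ε θ φ := by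
  simp only [vv]
  apply continuous_pi; intro i; fin_cases i <;> simp <;> fun_prop

lemma taylor_bound {ψ : (Fin 3 → ℝ) → ℝ} (hψ : ContDiff ℝ (⊤ : ℕ∞) ψ)
    {K : NNReal} (hK : LipschitzWith K (fderiv ℝ ψ))
    {ε : ℝ} (hε : 0 < ε) (y : Fin 3 → ℝ) (hy : ‖y‖ ≤ ε) :
    |ψ y - ψ 0 - (fderiv ℝ ψ 0) y| ≤ (K * ε) * ε := by
  set L := fderiv ℝ ψ 0 with hLdef
  have hψd : Differentiable ℝ ψ := hψ.differentiable (by simp)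
  have hdiff : ∀ z ∈ Metric.closedBall (0 : Fin 3 → ℝ) ε,
      DifferentiableAt ℝ (fun w => ψ w - L w) z :=
    fun z _ => (hψd z).sub L.differentiableAt
  have hbound : ∀ z ∈ Metric.closedBall (0 : Fin 3 → ℝ) ε,
      ‖fderiv ℝ (fun w => ψ w - L w) z‖ ≤ K * ε := by
    intro z hz
    rw [fderiv_fun_sub (hψd z) L.differentiableAt, L.fderiv]
    have h := hK.dist_le_mul z 0
    rw [dist_eq_norm, dist_eq_norm, sub_zero] at h
    have hz' : ‖z‖ ≤ ε := by simpa [dist_zero_right] using hz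
    calc ‖fderiv ℝ ψ z - L‖ ≤ K * ‖z‖ := h
      _ ≤ (K : ℝ) * ε := by gcongr
  have h0 : (0 : Fin 3 → ℝ) ∈ Metric.closedBall (0 : Fin 3 → ℝ) ε :=
    Metric.mem_closedBall_self hε.le
  have hy' : y ∈ Metric.closedBall (0 : Fin 3 → ℝ) ε := by simpa [dist_zero_right] using hy
  have h := (convex_closedBall (0 : Fin 3 → ℝ) ε).norm_image_sub_le_of_norm_fderiv_le
    hdiff hbound h0 hy'
  simp only [map_zero, sub_zero] at h
  have he : ψ y - ψ 0 - L y = (ψ y - L y) - ψ 0 := by ring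
  rw [← Real.norm_eq_abs, he]
  calc ‖ψ y - L y - ψ 0‖ ≤ K * ε * ‖y‖ := h
    _ ≤ (K : ℝ) * ε * ε := by gcongr

/-- For `ψ ∈ C_c^∞(ℝ³)`, one has
`J_ε + (4π/F²) ε⁻¹ (∫_{−π/2}^{π/2} G(φ) dφ) ψ(0) → 0` as `ε → 0⁺`. -/
theorem surface_term_limit
    (F : ℝ) (hF : F ∈ Set.Ioc (0 : ℝ) 1)
    (ψ : (Fin 3 → ℝ) → ℝ) (hψ : ContDiff ℝ (⊤ : ℕ∞) ψ) (hψc : HasCompactSupport ψ) :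
    Tendsto (fun ε : ℝ =>
        Jeps F ψ ε +
          (4 * π / F ^ 2) * (1 / ε) *
            (∫ φ in (-(π / 2) : ℝ)..(π / 2), Gfun F φ) * ψ 0)
      (𝓝[>] 0) (𝓝 0) := by
  obtain ⟨hF0, hF1⟩ := hF
  have hGcont : Continuous (Gfun F) := Gfun_continuous hF0 hF1
  have hGle : ∀ φ, |Gfun F φ| ≤ 1 := Gfun_abs_le hF0 hF1
  obtain ⟨K, hK⟩ : ∃ C : NNReal, LipschitzWith C (fderiv ℝ ψ) :=
    ContDiff.lipschitzWith_of_hasCompactSupport (hψc.fderiv ℝ) (hψ.fderiv_right (m := 1) (WithTop.coe_le_coe.mpr le_top)) one_ne_zero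
  set L := fderiv ℝ ψ 0 with hLdef
  set IG := ∫ φ in (-(π/2) : ℝ)..(π/2), Gfun F φ with hIGdef
  set IGc := ∫ φ in (-(π/2) : ℝ)..(π/2), Gfun F φ * Real.cos φ with hIGcdef
  have hIGs := Gsin_integral_zero hF0 hF1
  -- the key uniform bound
  have key : ∀ ε : ℝ, ε ∈ Set.Ioi (0:ℝ) →
      |Jeps F ψ ε + (4 * π / F ^ 2) * (1/ε) * IG * ψ 0| ≤
        (2 / F ^ 2) * ((K : ℝ) * π * (2 * π)) * ε := by
    intro ε hε
    rw [Set.mem_Ioi] at hε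
    -- continuity facts
    have hψv : ∀ θ, Continuous fun φ => ψ (vv ε θ φ) :=
      fun θ => hψ.continuous.comp (vv_continuous1 ε θ)
    have hLv : ∀ θ, Continuous fun φ => L (vv ε θ φ) :=
      fun θ => L.continuous.comp (vv_continuous1 ε θ)
    have hrcont : ∀ θ, Continuous fun φ => rr ψ L ε θ φ := by
      intro θ
      simp only [rr]
      exact (((hψv θ).sub continuous_const).sub (hLv θ)).div_const ε
    have hrbound : ∀ θ φ, |rr ψ L ε θ φ| ≤ (K : ℝ) * ε := by
      intro θ φ
      rw [rr, abs_div, abs_of_pos hε, div_le_iff₀ hε]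
      exact taylor_bound hψ hK hε _ (vv_norm_le hε θ φ)
    -- the inner integral as a function of θ
    have hIcont : Continuous fun θ =>
        ∫ φ in (-(π/2) : ℝ)..(π/2), Gfun F φ * ψ (vv ε θ φ) / ε := by
      apply intervalIntegral.continuous_parametric_intervalIntegral_of_continuous'
        (f := fun θ φ => Gfun F φ * ψ (vv ε θ φ) / ε)
      show Continuous fun p : ℝ × ℝ => Gfun F p.2 * ψ (vv ε p.1 p.2) / ε
      exact ((hGcont.comp continuous_snd).mul (hψ.continuous.comp (vv_continuous ε))).div_const ε
    -- inner integral computation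
    have hinner : ∀ θ : ℝ,
        (∫ φ in (-(π/2) : ℝ)..(π/2), Gfun F φ * ψ (vv ε θ φ) / ε) =
          IG * (ψ 0 / ε) + ((L ![1,0,0] * Real.cos θ) * IGc + (L ![0,1,0] * Real.sin θ) * IGc)
            + ∫ φ in (-(π/2) : ℝ)..(π/2), Gfun F φ * rr ψ L ε θ φ := by
      intro θ
      have heq : Set.EqOn (fun φ => Gfun F φ * ψ (vv ε θ φ) / ε)
          (fun φ => (Gfun F φ * (ψ 0 / ε) +
            ((L ![1,0,0] * Real.cos θ) * (Gfun F φ * Real.cos φ) +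
             (L ![0,1,0] * Real.sin θ) * (Gfun F φ * Real.cos φ) +
             L ![0,0,1] * (Gfun F φ * Real.sin φ))) + Gfun F φ * rr ψ L ε θ φ)
          (Set.uIcc (-(π/2) : ℝ) (π/2)) := by
        intro φ _
        have hv : L (vv ε θ φ) = (ε * Real.cos φ * Real.cos θ) * L ![1,0,0] +
            (ε * Real.cos φ * Real.sin θ) * L ![0,1,0] + (ε * Real.sin φ) * L ![0,0,1] :=
          CLM_apply_vec L _ _ _
        simp only [rr, hv]
        field_simp
        ring
      rw [intervalIntegral.integral_congr heq,
        intervalIntegral.integral_add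
          (((hGcont.fun_mul continuous_const).fun_add
            ((((continuous_const.fun_mul (hGcont.fun_mul Real.continuous_cos)).fun_add
              (continuous_const.fun_mul (hGcont.fun_mul Real.continuous_cos))).fun_add
              (continuous_const.fun_mul (hGcont.fun_mul Real.continuous_sin))))).intervalIntegrable _ _)
          ((hGcont.fun_mul (hrcont θ)).intervalIntegrable _ _),
        intervalIntegral.integral_add
          ((hGcont.fun_mul continuous_const).intervalIntegrable _ _)
          ((((continuous_const.fun_mul (hGcont.fun_mul Real.continuous_cos)).fun_add
              (continuous_const.fun_mul (hGcont.fun_mul Real.continuous_cos))).fun_add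
              (continuous_const.fun_mul (hGcont.fun_mul Real.continuous_sin))).intervalIntegrable _ _),
        intervalIntegral.integral_add
          (((continuous_const.fun_mul (hGcont.fun_mul Real.continuous_cos)).fun_add
              (continuous_const.fun_mul (hGcont.fun_mul Real.continuous_cos))).intervalIntegrable _ _)
          ((continuous_const.fun_mul (hGcont.fun_mul Real.continuous_sin)).intervalIntegrable _ _),
        intervalIntegral.integral_add
          ((continuous_const.fun_mul (hGcont.fun_mul Real.continuous_cos)).intervalIntegrable _ _)
          ((continuous_const.fun_mul (hGcont.fun_mul Real.continuous_cos)).intervalIntegrable _ _),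
        intervalIntegral.integral_mul_const,
        intervalIntegral.integral_const_mul, intervalIntegral.integral_const_mul,
        intervalIntegral.integral_const_mul, hIGs]
      rw [← hIGcdef, ← hIGdef]
      ring
    -- continuity of the remainder integral in θ
    have hRmcont : Continuous fun θ =>
        ∫ φ in (-(π/2) : ℝ)..(π/2), Gfun F φ * rr ψ L ε θ φ := by
      have hRmeq : (fun θ => ∫ φ in (-(π/2) : ℝ)..(π/2), Gfun F φ * rr ψ L ε θ φ)
          = fun θ => (∫ φ in (-(π/2) : ℝ)..(π/2), Gfun F φ * ψ (vv ε θ φ) / ε)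
            - (IG * (ψ 0 / ε) + ((L ![1,0,0] * Real.cos θ) * IGc
              + (L ![0,1,0] * Real.sin θ) * IGc)) := by
        funext θ; rw [hinner θ]; ring
      rw [hRmeq]
      exact hIcont.sub (by fun_prop)
    -- outer integral computation
    have houter : (∫ θ in (0:ℝ)..(2*π),
          ∫ φ in (-(π/2) : ℝ)..(π/2), Gfun F φ * ψ (vv ε θ φ) / ε) =
        (2*π) * (IG * (ψ 0 / ε)) +
          ∫ θ in (0:ℝ)..(2*π), ∫ φ in (-(π/2) : ℝ)..(π/2), Gfun F φ * rr ψ L ε θ φ := by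
      rw [intervalIntegral.integral_congr (g := fun θ =>
          (IG * (ψ 0 / ε) + ((L ![1,0,0] * Real.cos θ) * IGc
            + (L ![0,1,0] * Real.sin θ) * IGc))
          + ∫ φ in (-(π/2) : ℝ)..(π/2), Gfun F φ * rr ψ L ε θ φ)
          (fun θ _ => hinner θ),
        intervalIntegral.integral_add ((by fun_prop : Continuous fun θ : ℝ =>
          IG * (ψ 0 / ε) + ((L ![1,0,0] * Real.cos θ) * IGc
            + (L ![0,1,0] * Real.sin θ) * IGc)).intervalIntegrable _ _)
          (hRmcont.intervalIntegrable _ _)]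
      congr 1
      rw [intervalIntegral.integral_add (intervalIntegrable_const)
          (((continuous_const.fun_mul Real.continuous_cos).fun_mul continuous_const).fun_add
            ((continuous_const.fun_mul Real.continuous_sin).fun_mul continuous_const)
            |>.intervalIntegrable _ _),
        intervalIntegral.integral_const,
        intervalIntegral.integral_add
          (((continuous_const.fun_mul Real.continuous_cos).fun_mul continuous_const).intervalIntegrable _ _)
          (((continuous_const.fun_mul Real.continuous_sin).fun_mul continuous_const).intervalIntegrable _ _),
        intervalIntegral.integral_mul_const, intervalIntegral.integral_mul_const,
        intervalIntegral.integral_const_mul, intervalIntegral.integral_const_mul,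
        integral_cos, integral_sin]
      simp [Real.sin_two_pi, Real.cos_two_pi]
    -- assemble the bound
    have hJ : Jeps F ψ ε = -(2 / F ^ 2) * ∫ θ in (0:ℝ)..(2*π),
        ∫ φ in (-(π/2) : ℝ)..(π/2), Gfun F φ * ψ (vv ε θ φ) / ε := by
      simp only [Jeps, vv]
    have hb : |∫ θ in (0:ℝ)..(2*π),
        ∫ φ in (-(π/2) : ℝ)..(π/2), Gfun F φ * rr ψ L ε θ φ| ≤ ((K:ℝ) * ε * π) * (2*π) := by
      have h1 : ∀ θ ∈ Set.uIoc (0:ℝ) (2*π),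
          ‖∫ φ in (-(π/2) : ℝ)..(π/2), Gfun F φ * rr ψ L ε θ φ‖ ≤ (K:ℝ) * ε * π := by
        intro θ _
        have h2 : ∀ φ ∈ Set.uIoc (-(π/2) : ℝ) (π/2),
            ‖Gfun F φ * rr ψ L ε θ φ‖ ≤ (K:ℝ) * ε := by
          intro φ _
          rw [Real.norm_eq_abs, abs_mul]
          calc |Gfun F φ| * |rr ψ L ε θ φ| ≤ 1 * ((K:ℝ) * ε) :=
                mul_le_mul (hGle φ) (hrbound θ φ) (abs_nonneg _) zero_le_one
            _ = (K:ℝ) * ε := one_mul _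
        have h3 := intervalIntegral.norm_integral_le_of_norm_le_const h2
        have h4 : |(π/2 : ℝ) - (-(π/2))| = π := by
          rw [show (π/2 : ℝ) - (-(π/2)) = π by ring, abs_of_pos Real.pi_pos]
        rw [h4] at h3
        exact h3
      have h5 := intervalIntegral.norm_integral_le_of_norm_le_const h1
      have h6 : |(2*π : ℝ) - 0| = 2*π := by
        rw [sub_zero, abs_of_pos (by positivity)]
      rw [h6] at h5
      exact h5
    rw [hJ, houter]
    have hsimp : -(2 / F ^ 2) * ((2*π) * (IG * (ψ 0 / ε)) +
          ∫ θ in (0:ℝ)..(2*π), ∫ φ in (-(π/2) : ℝ)..(π/2), Gfun F φ * rr ψ L ε θ φ)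
        + (4 * π / F ^ 2) * (1/ε) * IG * ψ 0
        = -(2 / F ^ 2) *
          ∫ θ in (0:ℝ)..(2*π), ∫ φ in (-(π/2) : ℝ)..(π/2), Gfun F φ * rr ψ L ε θ φ := by
      ring
    rw [hsimp]
    calc |(-(2 / F ^ 2)) * ∫ θ in (0:ℝ)..(2*π),
          ∫ φ in (-(π/2) : ℝ)..(π/2), Gfun F φ * rr ψ L ε θ φ|
        = (2 / F ^ 2) * |∫ θ in (0:ℝ)..(2*π),
          ∫ φ in (-(π/2) : ℝ)..(π/2), Gfun F φ * rr ψ L ε θ φ| := by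
          rw [abs_mul, abs_neg, abs_of_pos (by positivity)]
      _ ≤ (2 / F ^ 2) * (((K:ℝ) * ε * π) * (2*π)) := by gcongr
      _ = (2 / F ^ 2) * ((K : ℝ) * π * (2 * π)) * ε := by ring
  -- conclude by squeezing
  have hsq : Tendsto (fun ε : ℝ => (2 / F ^ 2) * ((K : ℝ) * π * (2 * π)) * ε)
      (𝓝[>] (0:ℝ)) (𝓝 0) := by
    have : Tendsto (fun ε : ℝ => (2 / F ^ 2) * ((K : ℝ) * π * (2 * π)) * ε)
        (𝓝 (0:ℝ)) (𝓝 0) := by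
      simpa using (continuous_const.fun_mul continuous_id).tendsto (0 : ℝ)
    exact this.mono_left nhdsWithin_le_nhds
  apply squeeze_zero_norm' _ hsq
  filter_upwards [self_mem_nhdsWithin] with ε hε
  rw [Real.norm_eq_abs]
  exact key ε hε
end
end

section
/- Let t > 0 and let w : [0,t] × ℝ³ → ℝ³ be continuous, C¹ in the space variable, with V := ∫₀ᵗ ‖D_x w(τ,·)‖_{L^∞} dτ < ∞. Let ψ : [0,t] × ℝ³ → ℝ³ satisfy ψ_τ(x) = x + ∫₀^τ w(s, ψ_s(x)) ds for all τ ∈ [0,t] and x ∈ ℝ³, and assume each ψ_τ is a C¹ diffeomorphism of ℝ³ with ‖Dψ_τ‖_{L^∞} ≤ A for all τ ∈ [0,t] and ‖D(ψ_t^{-1})‖_{L^∞} ≤ A, for some A ≥ 1. For x, y ∈ ℝ³ set m_x(y) = ψ_t^{-1}(x) − ψ_t^{-1}(x+y). Then for all x, y ∈ ℝ³: |m_x(−y) − y| ≤ A² V |y| and |m_x(y) + y| ≤ A² V |y|. -/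
open MeasureTheory
open scoped Real

noncomputable section

/-!
Write `V = ∫₀ᵗ W`. Subtracting the integral equations of two trajectories and using that `w τ` is
`W τ`-Lipschitz and `ψ τ` is `A`-Lipschitz gives `|(ψ_t a - ψ_t b) - (a - b)| ≤ A V |a - b|`.
Substituting `a = φ u`, `b = φ v` with `φ = ψ_t⁻¹` and using that `φ` is `A`-Lipschitz yields
`|(φ u - φ v) - (u - v)| ≤ A² V |u - v|`, and both estimates are the cases `v = x ∓ y`.

The integral equation is all we know about the time dependence of a trajectory, and it does not
force `s ↦ w s (ψ s a)` to be integrable (the Bochner integral of a non-integrable function is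
`0`); measurability of this integrand is therefore proved for an arbitrary primitive.
-/

section

variable {E : Type*} [NormedAddCommGroup E] [NormedSpace ℝ E]

theorem norm_sub_le_of_norm_fderiv_le {F : Type*} [NormedAddCommGroup F] [NormedSpace ℝ F]
    {f : E → F} (hf : Differentiable ℝ f) {C : ℝ} (hC : ∀ x, ‖fderiv ℝ f x‖ ≤ C) (x y : E) :
    ‖f x - f y‖ ≤ C * ‖x - y‖ :=
  convex_univ.norm_image_sub_le_of_norm_fderiv_le (fun z _ => hf z) (fun z _ => hC z)
    trivial trivial

theorem norm_integral_sub_integral_le {α : Type*} [MeasurableSpace α] {μ : Measure α}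
    {f g : α → E} {h : α → ℝ} (hf : AEStronglyMeasurable f μ) (hg : AEStronglyMeasurable g μ)
    (hh : Integrable h μ) (hfg : ∀ᵐ x ∂μ, ‖f x - g x‖ ≤ h x) :
    ‖(∫ x, f x ∂μ) - ∫ x, g x ∂μ‖ ≤ ∫ x, h x ∂μ := by
  have hsub : Integrable (f - g) μ := hh.mono' (hf.sub hg) hfg
  by_cases hfi : Integrable f μ
  · have hgi : Integrable g μ := by simpa using hfi.sub hsub
    rw [← integral_sub hfi hgi]
    exact norm_integral_le_of_norm_le hh hfg
  · have hgi : ¬ Integrable g μ := fun hgi => hfi (by simpa using hgi.add hsub)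
    rw [integral_undef hfi, integral_undef hgi, sub_zero, norm_zero]
    exact integral_nonneg_of_ae (hfg.mono fun x hx => (norm_nonneg _).trans hx)

theorem continuousAt_setIntegral_Ioc {g : ℝ → E} {a σ τ : ℝ}
    (hg : IntegrableOn g (Set.Ioc a σ)) (hτ : τ ∈ Set.Ioo a σ) :
    ContinuousAt (fun x => ∫ s in Set.Ioc a x, g s) τ := by
  rw [← integrableOn_Icc_iff_integrableOn_Ioc] at hg
  exact (intervalIntegral.continuousOn_primitive hg).continuousAt
    (Icc_mem_nhds hτ.1 hτ.2)

/-- The set of `τ` for which `g` is integrable on `(a, τ]` is an initial segment of `[a, b]`: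
below its supremum the primitive is continuous, above it the primitive is the junk value `0`. -/
theorem aestronglyMeasurable_setIntegral_Ioc (g : ℝ → E) (a b : ℝ) :
    AEStronglyMeasurable (fun τ => ∫ s in Set.Ioc a τ, g s) (volume.restrict (Set.Ioc a b)) := by
  rcases lt_or_ge b a with hba | hab
  · simp [Set.Ioc_eq_empty_of_le hba.le]
  set S : Set ℝ := {τ | τ ∈ Set.Icc a b ∧ IntegrableOn g (Set.Ioc a τ)}
  have haS : a ∈ S := ⟨⟨le_rfl, hab⟩, by simp⟩
  have hSbdd : BddAbove S := ⟨b, fun τ hτ => hτ.1.2⟩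
  set T := sSup S
  have haT : a ≤ T := le_csSup hSbdd haS
  have hTb : T ≤ b := csSup_le ⟨a, haS⟩ fun τ hτ => hτ.1.2
  have hcont : ContinuousOn (fun τ => ∫ s in Set.Ioc a τ, g s) (Set.Ioo a T) := by
    intro τ hτ
    obtain ⟨σ, hσS, hτσ⟩ := exists_lt_of_lt_csSup ⟨a, haS⟩ hτ.2
    exact (continuousAt_setIntegral_Ioc hσS.2 ⟨hτ.1, hτσ⟩).continuousWithinAt
  have hzero : ∀ τ ∈ Set.Ioc T b, ∫ s in Set.Ioc a τ, g s = 0 := by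
    intro τ hτ
    refine integral_undef fun hg => ?_
    exact (le_csSup hSbdd ⟨⟨haT.trans hτ.1.le, hτ.2⟩, hg⟩).not_gt hτ.1
  rw [← Set.Ioc_union_Ioc_eq_Ioc haT hTb]
  refine AEStronglyMeasurable.mono_measure ?_ (Measure.restrict_union_le _ _)
  refine aestronglyMeasurable_add_measure_iff.mpr ⟨?_, ?_⟩
  · rw [← restrict_Ioo_eq_restrict_Ioc]
    exact hcont.aestronglyMeasurable measurableSet_Ioo
  · refine (aestronglyMeasurable_const (b := (0 : E))).congr ?_
    exact (ae_restrict_of_forall_mem measurableSet_Ioc hzero).mono fun τ hτ => hτ.symm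

variable {t : ℝ} {w ψ : ℝ → E → E}

theorem aestronglyMeasurable_vectorField_along_flow (hw : Continuous (Function.uncurry w))
    (hψ : ∀ τ ∈ Set.Icc (0 : ℝ) t, ∀ x, ψ τ x = x + ∫ s in Set.Ioc (0 : ℝ) τ, w s (ψ s x))
    (a : E) :
    AEStronglyMeasurable (fun s => w s (ψ s a)) (volume.restrict (Set.Ioc 0 t)) := by
  have htraj : AEStronglyMeasurable (fun s => ψ s a) (volume.restrict (Set.Ioc 0 t)) := by
    refine ((aestronglyMeasurable_const (b := a)).add
      (aestronglyMeasurable_setIntegral_Ioc (fun s => w s (ψ s a)) 0 t)).congr ?_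
    exact ae_restrict_of_forall_mem measurableSet_Ioc fun τ hτ =>
      (hψ τ (Set.Ioc_subset_Icc_self hτ) a).symm
  exact hw.comp_aestronglyMeasurable (aestronglyMeasurable_id.prodMk htraj)

theorem norm_flow_sub_sub_le (ht : 0 ≤ t) (hw : Continuous (Function.uncurry w))
    {W : ℝ → ℝ} (hW : IntegrableOn W (Set.Ioc 0 t)) (hW₀ : ∀ τ ∈ Set.Ioc (0 : ℝ) t, 0 ≤ W τ)
    (hwW : ∀ τ ∈ Set.Icc (0 : ℝ) t, ∀ x y, ‖w τ x - w τ y‖ ≤ W τ * ‖x - y‖)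
    (hψ : ∀ τ ∈ Set.Icc (0 : ℝ) t, ∀ x, ψ τ x = x + ∫ s in Set.Ioc (0 : ℝ) τ, w s (ψ s x))
    {A : ℝ} (hψA : ∀ τ ∈ Set.Icc (0 : ℝ) t, ∀ x y, ‖ψ τ x - ψ τ y‖ ≤ A * ‖x - y‖) (a b : E) :
    ‖(ψ t a - ψ t b) - (a - b)‖ ≤ A * (∫ τ in Set.Ioc 0 t, W τ) * ‖a - b‖ := by
  have hbound : ∀ s ∈ Set.Ioc (0 : ℝ) t,
      ‖w s (ψ s a) - w s (ψ s b)‖ ≤ A * ‖a - b‖ * W s := fun s hs =>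
    calc ‖w s (ψ s a) - w s (ψ s b)‖ ≤ W s * ‖ψ s a - ψ s b‖ :=
          hwW s (Set.Ioc_subset_Icc_self hs) _ _
      _ ≤ W s * (A * ‖a - b‖) :=
          mul_le_mul_of_nonneg_left (hψA s (Set.Ioc_subset_Icc_self hs) a b) (hW₀ s hs)
      _ = A * ‖a - b‖ * W s := by ring
  have htI : t ∈ Set.Icc (0 : ℝ) t := ⟨ht, le_rfl⟩
  calc ‖(ψ t a - ψ t b) - (a - b)‖
      = ‖(∫ s in Set.Ioc 0 t, w s (ψ s a)) - ∫ s in Set.Ioc 0 t, w s (ψ s b)‖ := by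
        rw [hψ t htI a, hψ t htI b]; congr 1; abel
    _ ≤ ∫ s in Set.Ioc 0 t, A * ‖a - b‖ * W s :=
        norm_integral_sub_integral_le (aestronglyMeasurable_vectorField_along_flow hw hψ a)
          (aestronglyMeasurable_vectorField_along_flow hw hψ b) (hW.const_mul _)
          (ae_restrict_of_forall_mem measurableSet_Ioc hbound)
    _ = A * (∫ τ in Set.Ioc 0 t, W τ) * ‖a - b‖ := by rw [integral_const_mul]; ring

end

theorem norm_sub_sub_le_of_rightInverse {E : Type*} [SeminormedAddCommGroup E] {f g : E → E}
    (hfg : Function.RightInverse g f) {K A : ℝ} (hK : 0 ≤ K)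
    (hf : ∀ a b, ‖(f a - f b) - (a - b)‖ ≤ K * ‖a - b‖)
    (hg : ∀ u v, ‖g u - g v‖ ≤ A * ‖u - v‖) (u v : E) :
    ‖(g u - g v) - (u - v)‖ ≤ K * A * ‖u - v‖ :=
  calc ‖(g u - g v) - (u - v)‖ = ‖(f (g u) - f (g v)) - (g u - g v)‖ := by
        rw [hfg u, hfg v, norm_sub_rev]
    _ ≤ K * ‖g u - g v‖ := hf _ _
    _ ≤ K * (A * ‖u - v‖) := mul_le_mul_of_nonneg_left (hg u v) hK
    _ = K * A * ‖u - v‖ := by ring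

theorem lagrangian_displacement_estimate_general
    (t : ℝ) (ht : 0 < t)
    (w : ℝ → EuclideanSpace ℝ (Fin 3) → EuclideanSpace ℝ (Fin 3))
    (hw : Continuous (Function.uncurry w))
    (hwdiff : ∀ τ ∈ Set.Icc (0 : ℝ) t, Differentiable ℝ (w τ))
    -- `W` is a bound for `‖D_x w(τ,·)‖_{L^∞}`, integrable on `[0,t]`, so that
    -- `V = ∫₀ᵗ W(τ) dτ ≥ ∫₀ᵗ ‖D_x w(τ,·)‖_{L^∞} dτ` is finite.
    (W : ℝ → ℝ) (hW : IntegrableOn W (Set.Ioc (0 : ℝ) t))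
    (hWb : ∀ τ ∈ Set.Icc (0 : ℝ) t, ∀ x, ‖fderiv ℝ (w τ) x‖ ≤ W τ)
    (ψ : ℝ → EuclideanSpace ℝ (Fin 3) → EuclideanSpace ℝ (Fin 3))
    (hψ : ∀ τ ∈ Set.Icc (0 : ℝ) t, ∀ x,
      ψ τ x = x + ∫ s in Set.Ioc (0 : ℝ) τ, w s (ψ s x))
    (hψdiffeo : ∀ τ ∈ Set.Icc (0 : ℝ) t, ContDiff ℝ 1 (ψ τ) ∧ Function.Bijective (ψ τ))
    (φ : EuclideanSpace ℝ (Fin 3) → EuclideanSpace ℝ (Fin 3))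
    (hφr : Function.RightInverse φ (ψ t))
    (hφdiff : ContDiff ℝ 1 φ)
    (A : ℝ)
    (hDψ : ∀ τ ∈ Set.Icc (0 : ℝ) t, ∀ x, ‖fderiv ℝ (ψ τ) x‖ ≤ A)
    (hDφ : ∀ x, ‖fderiv ℝ φ x‖ ≤ A) :
    ∀ x y : EuclideanSpace ℝ (Fin 3),
      ‖(φ x - φ (x - y)) - y‖ ≤ A ^ 2 * (∫ τ in Set.Ioc (0 : ℝ) t, W τ) * ‖y‖ ∧
      ‖(φ x - φ (x + y)) + y‖ ≤ A ^ 2 * (∫ τ in Set.Ioc (0 : ℝ) t, W τ) * ‖y‖ := by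
  intro x y
  have hW₀ : ∀ τ ∈ Set.Ioc (0 : ℝ) t, 0 ≤ W τ := fun τ hτ =>
    (norm_nonneg _).trans (hWb τ (Set.Ioc_subset_Icc_self hτ) 0)
  have hA₀ : 0 ≤ A := (norm_nonneg _).trans (hDφ 0)
  have hV₀ : 0 ≤ ∫ τ in Set.Ioc (0 : ℝ) t, W τ := setIntegral_nonneg measurableSet_Ioc hW₀
  have hflow := norm_flow_sub_sub_le ht.le hw hW hW₀
    (fun τ hτ => norm_sub_le_of_norm_fderiv_le (hwdiff τ hτ) (hWb τ hτ)) hψ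
    (fun τ hτ => norm_sub_le_of_norm_fderiv_le
      ((hψdiffeo τ hτ).1.differentiable one_ne_zero) (hDψ τ hτ))
  have hinv := norm_sub_sub_le_of_rightInverse hφr (mul_nonneg hA₀ hV₀) hflow
    (norm_sub_le_of_norm_fderiv_le (hφdiff.differentiable one_ne_zero) hDφ) x
  constructor
  · simpa [sq, mul_comm, mul_left_comm, mul_assoc] using hinv (x - y)
  · simpa [sq, mul_comm, mul_left_comm, mul_assoc, sub_eq_add_neg] using hinv (x + y)

/-- Estimate on the Lagrangian displacement `m_x(y) = ψ_t^{-1}(x) − ψ_t^{-1}(x+y)` of the flow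
`ψ` of a time-dependent vector field `w`: `|m_x(−y) − y| ≤ A² V |y|` and
`|m_x(y) + y| ≤ A² V |y|`, where `V = ∫₀ᵗ ‖D_x w(τ)‖_{L^∞} dτ`. -/
theorem lagrangian_displacement_estimate
    (t : ℝ) (ht : 0 < t)
    (w : ℝ → EuclideanSpace ℝ (Fin 3) → EuclideanSpace ℝ (Fin 3))
    (hw : Continuous (Function.uncurry w))
    (hwdiff : ∀ τ ∈ Set.Icc (0 : ℝ) t, Differentiable ℝ (w τ))
    -- `W` is a bound for `‖D_x w(τ,·)‖_{L^∞}`, integrable on `[0,t]`, so that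
    -- `V = ∫₀ᵗ W(τ) dτ ≥ ∫₀ᵗ ‖D_x w(τ,·)‖_{L^∞} dτ` is finite.
    (W : ℝ → ℝ) (hW : IntegrableOn W (Set.Ioc (0 : ℝ) t))
    (hWb : ∀ τ ∈ Set.Icc (0 : ℝ) t, ∀ x, ‖fderiv ℝ (w τ) x‖ ≤ W τ)
    (ψ : ℝ → EuclideanSpace ℝ (Fin 3) → EuclideanSpace ℝ (Fin 3))
    (hψ : ∀ τ ∈ Set.Icc (0 : ℝ) t, ∀ x,
      ψ τ x = x + ∫ s in Set.Ioc (0 : ℝ) τ, w s (ψ s x))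
    (hψdiffeo : ∀ τ ∈ Set.Icc (0 : ℝ) t, ContDiff ℝ 1 (ψ τ) ∧ Function.Bijective (ψ τ))
    (φ : EuclideanSpace ℝ (Fin 3) → EuclideanSpace ℝ (Fin 3))
    (hφl : Function.LeftInverse φ (ψ t)) (hφr : Function.RightInverse φ (ψ t))
    (hφdiff : ContDiff ℝ 1 φ)
    (A : ℝ) (hA : 1 ≤ A)
    (hDψ : ∀ τ ∈ Set.Icc (0 : ℝ) t, ∀ x, ‖fderiv ℝ (ψ τ) x‖ ≤ A)
    (hDφ : ∀ x, ‖fderiv ℝ φ x‖ ≤ A) :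
    ∀ x y : EuclideanSpace ℝ (Fin 3),
      ‖(φ x - φ (x - y)) - y‖ ≤ A ^ 2 * (∫ τ in Set.Ioc (0 : ℝ) t, W τ) * ‖y‖ ∧
      ‖(φ x - φ (x + y)) + y‖ ≤ A ^ 2 * (∫ τ in Set.Ioc (0 : ℝ) t, W τ) * ‖y‖ :=
  lagrangian_displacement_estimate_general t ht w hw hwdiff W hW hWb ψ hψ hψdiffeo φ hφr hφdiff A
    hDψ hDφ
end
end

section
/- Let m : ℝ³ → ℝ³ be a bijection preserving Lebesgue measure, let ε > 0 and let C_j ≥ 0 be such that for every y ∈ ℝ³ with |y| ≥ ε and |m(−y)| < ε one has | |m(−y)| − |m(y)| | ≤ C_j ε². Then the Lebesgue measure of the set {y ∈ ℝ³ : |y| ≥ ε, |m(−y)| < ε and |m(y)| ≥ ε} is at most (4π/3) ε⁴ (3 C_j + 3 ε C_j² + ε² C_j³). -/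
open MeasureTheory
open scoped Real ENNReal

noncomputable section

lemma vol_ball3 (r : ℝ) (hr : 0 ≤ r) :
    volume (Metric.ball (0 : EuclideanSpace ℝ (Fin 3)) r)
      = ENNReal.ofReal ((4 * π / 3) * r ^ 3) := by
  rw [EuclideanSpace.volume_ball]
  have hcard : (Fintype.card (Fin 3) : ℝ) = 3 := by simp
  have hΓ : Real.Gamma ((Fintype.card (Fin 3) : ℝ) / 2 + 1) = 3 / 4 * Real.sqrt π := by
    rw [hcard]
    have h32 : (3 : ℝ) / 2 + 1 = 3 / 2 + 1 := rfl
    have : Real.Gamma (3 / 2 + 1) = (3 / 2) * Real.Gamma (3 / 2) := by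
      rw [Real.Gamma_add_one (by norm_num)]
    rw [this]
    have h12 : (3 : ℝ) / 2 = 1 / 2 + 1 := by norm_num
    rw [h12, Real.Gamma_add_one (by norm_num), Real.Gamma_one_half_eq]
    ring
  have hsp : (0:ℝ) < Real.sqrt π := Real.sqrt_pos.mpr Real.pi_pos
  rw [hΓ]
  rw [← ENNReal.ofReal_pow hr, ← ENNReal.ofReal_mul (by positivity)]
  congr 1
  have : Real.sqrt π ^ Fintype.card (Fin 3) = π * Real.sqrt π := by
    simp only [Fintype.card_fin]
    rw [pow_succ, Real.sq_sqrt Real.pi_pos.le]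
  rw [this]
  have : π * Real.sqrt π / (3 / 4 * Real.sqrt π) = 4 * π / 3 := by
    field_simp
  rw [Fintype.card_fin, this]
  ring

/-- Volume bound for the symmetric difference of the truncation sets: if `m` is a
measure-preserving bijection of `ℝ³` and `||m(−y)| − |m(y)|| ≤ C_j ε²` whenever
`|y| ≥ ε` and `|m(−y)| < ε`, then
`vol {y : |y| ≥ ε, |m(−y)| < ε, |m(y)| ≥ ε} ≤ (4π/3) ε⁴ (3C_j + 3εC_j² + ε²C_j³)`. -/
theorem symmetric_difference_volume_estimate
    (m : EuclideanSpace ℝ (Fin 3) → EuclideanSpace ℝ (Fin 3))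
    (hbij : Function.Bijective m)
    (hmp : MeasurePreserving m (volume : Measure (EuclideanSpace ℝ (Fin 3))) volume)
    (ε : ℝ) (hε : 0 < ε) (Cj : ℝ) (hCj : 0 ≤ Cj)
    (hdiff : ∀ y : EuclideanSpace ℝ (Fin 3), ε ≤ ‖y‖ → ‖m (-y)‖ < ε →
      |‖m (-y)‖ - ‖m y‖| ≤ Cj * ε ^ 2) :
    volume {y : EuclideanSpace ℝ (Fin 3) | ε ≤ ‖y‖ ∧ ‖m (-y)‖ < ε ∧ ε ≤ ‖m y‖} ≤
      ENNReal.ofReal ((4 * π / 3) * ε ^ 4 * (3 * Cj + 3 * ε * Cj ^ 2 + ε ^ 2 * Cj ^ 3)) := by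
  set R : ℝ := ε + Cj * ε ^ 2 with hR
  have hεR : ε ≤ R := by nlinarith
  -- the set is contained in the preimage of the annulus
  have hsub : {y : EuclideanSpace ℝ (Fin 3) | ε ≤ ‖y‖ ∧ ‖m (-y)‖ < ε ∧ ε ≤ ‖m y‖}
      ⊆ m ⁻¹' (Metric.ball (0 : EuclideanSpace ℝ (Fin 3)) R \ Metric.ball 0 ε) := by
    rintro y ⟨hy, hmy, hmy'⟩
    have habs := hdiff y hy hmy
    have h1 : ‖m y‖ < R := by
      have := abs_le.mp habs
      simp only [hR]
      linarith [this.1]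
    constructor
    · simpa [Metric.mem_ball, dist_eq_norm] using h1
    · simp only [Metric.mem_ball, dist_eq_norm, sub_zero, not_lt]
      exact hmy'
  calc volume {y : EuclideanSpace ℝ (Fin 3) | ε ≤ ‖y‖ ∧ ‖m (-y)‖ < ε ∧ ε ≤ ‖m y‖}
      ≤ volume (m ⁻¹' (Metric.ball (0 : EuclideanSpace ℝ (Fin 3)) R \ Metric.ball 0 ε)) :=
        measure_mono hsub
    _ = volume (Metric.ball (0 : EuclideanSpace ℝ (Fin 3)) R \ Metric.ball 0 ε) :=
        hmp.measure_preimage (measurableSet_ball.diff measurableSet_ball).nullMeasurableSet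
    _ ≤ ENNReal.ofReal ((4 * π / 3) * ε ^ 4 * (3 * Cj + 3 * ε * Cj ^ 2 + ε ^ 2 * Cj ^ 3)) := by
        rw [measure_diff (Metric.ball_subset_ball hεR) measurableSet_ball.nullMeasurableSet
          (measure_ball_lt_top).ne]
        rw [vol_ball3 R (le_trans hε.le hεR), vol_ball3 ε hε.le]
        rw [← ENNReal.ofReal_sub _ (by positivity)]
        apply ENNReal.ofReal_le_ofReal
        have hpi : (0:ℝ) < π := Real.pi_pos
        simp only [hR]
        nlinarith [sq_nonneg ε, sq_nonneg Cj, mul_pos hpi hε]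
end
end

section
/- Let F ∈ (0,1] and ν, ν' > 0. For every ξ ∈ ℝ³ with ξ ≠ 0, (|ξ|²/|ξ|_F²)(ν ξ₁² + ν ξ₂² + ν' F² ξ₃²) = ν ξ₁² + ν ξ₂² + ((1 − F²)ν + F²ν') ξ₃² − (ν − ν') F² (1 − F²) · ξ₃⁴ / |ξ|_F². (At the level of Fourier symbols, this is the decomposition Γ = Γ_L + (ν − ν')F²(1 − F²)Λ² of the quasi-geostrophic diffusion operator into a constant-coefficient local second-order operator Γ_L = ν∂₁² + ν∂₂² + ((1−F²)ν + F²ν')∂₃² and the square of the non-local operator Λ = ∂₃²(−Δ_F)^{−1/2}.) -/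
/-!
Clearing the denominator `|ξ|_F²` turns the claim into a polynomial identity; it rests on
`|ξ|² = |ξ|_F² + (1 − F²) ξ₃²`. The denominator is nonzero because `F² |ξ|² ≤ |ξ|_F²` for `F² ≤ 1`.
-/

theorem EuclideanSpace.real_norm_sq_eq_fin_three (ξ : EuclideanSpace ℝ (Fin 3)) :
    ‖ξ‖ ^ 2 = ξ 0 ^ 2 + ξ 1 ^ 2 + ξ 2 ^ 2 := by
  rw [EuclideanSpace.real_norm_sq_eq, Fin.sum_univ_three]

theorem sq_mul_sum_sq_le_anisotropic {F : ℝ} (hF : F ^ 2 ≤ 1) (x y z : ℝ) :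
    F ^ 2 * (x ^ 2 + y ^ 2 + z ^ 2) ≤ x ^ 2 + y ^ 2 + F ^ 2 * z ^ 2 := by
  nlinarith [sq_nonneg x, sq_nonneg y]

theorem anisotropic_norm_sq_pos {F : ℝ} (hF : F ∈ Set.Ioc (0 : ℝ) 1)
    {ξ : EuclideanSpace ℝ (Fin 3)} (hξ : ξ ≠ 0) :
    0 < ξ 0 ^ 2 + ξ 1 ^ 2 + F ^ 2 * ξ 2 ^ 2 := by
  have hF_sq : F ^ 2 ≤ 1 := pow_le_one₀ hF.1.le hF.2
  have hξ_sq : 0 < ξ 0 ^ 2 + ξ 1 ^ 2 + ξ 2 ^ 2 := by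
    rw [← EuclideanSpace.real_norm_sq_eq_fin_three]
    exact pow_pos (norm_pos_iff.mpr hξ) 2
  calc 0 < F ^ 2 * (ξ 0 ^ 2 + ξ 1 ^ 2 + ξ 2 ^ 2) := mul_pos (pow_pos hF.1 2) hξ_sq
    _ ≤ _ := sq_mul_sum_sq_le_anisotropic hF_sq _ _ _

theorem div_anisotropic_mul_eq_local_sub_nonlocal {K : Type*} [Field K] {F x y z : K}
    (ν ν' : K) (hD : x ^ 2 + y ^ 2 + F ^ 2 * z ^ 2 ≠ 0) :
    (x ^ 2 + y ^ 2 + z ^ 2) / (x ^ 2 + y ^ 2 + F ^ 2 * z ^ 2) *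
        (ν * x ^ 2 + ν * y ^ 2 + ν' * F ^ 2 * z ^ 2) =
      ν * x ^ 2 + ν * y ^ 2 + ((1 - F ^ 2) * ν + F ^ 2 * ν') * z ^ 2 -
        (ν - ν') * F ^ 2 * (1 - F ^ 2) * z ^ 4 / (x ^ 2 + y ^ 2 + F ^ 2 * z ^ 2) := by
  rw [div_mul_eq_mul_div, eq_sub_iff_add_eq, ← add_div, div_eq_iff hD]
  ring

theorem gamma_symbol_decomposition_general
    (F : ℝ) (hF : F ∈ Set.Ioc (0 : ℝ) 1)
    (ν ν' : ℝ)
    (ξ : EuclideanSpace ℝ (Fin 3)) (hξ : ξ ≠ 0) :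
    (‖ξ‖ ^ 2 / (ξ 0 ^ 2 + ξ 1 ^ 2 + F ^ 2 * ξ 2 ^ 2)) *
        (ν * ξ 0 ^ 2 + ν * ξ 1 ^ 2 + ν' * F ^ 2 * ξ 2 ^ 2) =
      ν * ξ 0 ^ 2 + ν * ξ 1 ^ 2 + ((1 - F ^ 2) * ν + F ^ 2 * ν') * ξ 2 ^ 2 -
        (ν - ν') * F ^ 2 * (1 - F ^ 2) * ξ 2 ^ 4 /
          (ξ 0 ^ 2 + ξ 1 ^ 2 + F ^ 2 * ξ 2 ^ 2) := by
  rw [EuclideanSpace.real_norm_sq_eq_fin_three]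
  exact div_anisotropic_mul_eq_local_sub_nonlocal ν ν' (anisotropic_norm_sq_pos hF hξ).ne'

/-- Symbol-level decomposition `Γ = Γ_L + (ν − ν')F²(1 − F²)Λ²` of the quasi-geostrophic
diffusion operator: for `ξ ≠ 0`,
`(|ξ|²/|ξ|_F²)(νξ₁² + νξ₂² + ν'F²ξ₃²)
  = νξ₁² + νξ₂² + ((1−F²)ν + F²ν')ξ₃² − (ν−ν')F²(1−F²) ξ₃⁴/|ξ|_F²`. -/
theorem gamma_symbol_decomposition
    (F : ℝ) (hF : F ∈ Set.Ioc (0 : ℝ) 1)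
    (ν ν' : ℝ) (hν : 0 < ν) (hν' : 0 < ν')
    (ξ : EuclideanSpace ℝ (Fin 3)) (hξ : ξ ≠ 0) :
    (‖ξ‖ ^ 2 / (ξ 0 ^ 2 + ξ 1 ^ 2 + F ^ 2 * ξ 2 ^ 2)) *
        (ν * ξ 0 ^ 2 + ν * ξ 1 ^ 2 + ν' * F ^ 2 * ξ 2 ^ 2) =
      ν * ξ 0 ^ 2 + ν * ξ 1 ^ 2 + ((1 - F ^ 2) * ν + F ^ 2 * ν') * ξ 2 ^ 2 -
        (ν - ν') * F ^ 2 * (1 - F ^ 2) * ξ 2 ^ 4 /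
          (ξ 0 ^ 2 + ξ 1 ^ 2 + F ^ 2 * ξ 2 ^ 2) :=
  gamma_symbol_decomposition_general F hF ν ν' ξ hξ
end
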